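/- Let X, Y, Z be real normed spaces with X, Y of dimension at least 2, and let T : X × Y → Z be a nonzero bounded bilinear operator. Then no point of the norm attainment set M_T is a smooth point of the unit sphere of X × Y (with the max norm). -/

import Mathlib

def SmoothPt {X : Type*} [NormedAddCommGroup X] [NormedSpace ℝ X] (x : X) : Prop :=
  ‖x‖ = 1 ∧ ∃! f : X →L[ℝ] ℝ, ‖f‖ = 1 ∧ f x = 1

/-! At a norm-attaining point `(x, y)` the estimate `‖T x y‖ ≤ ‖T‖ ‖x‖ ‖y‖` forces
`‖x‖ = ‖y‖ = 1`. A norming functional of `x` composed with the first projection and one of `y`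
composed with the second projection then both support `(x, y)`, and they differ at `(0, y)`. -/

section

variable {X Y Z : Type*} [NormedAddCommGroup X] [NormedSpace ℝ X]
  [NormedAddCommGroup Y] [NormedSpace ℝ Y] [NormedAddCommGroup Z] [NormedSpace ℝ Z]

theorem norm_eq_one_of_norm_apply_apply_eq_opNorm {T : X →L[ℝ] Y →L[ℝ] Z} (hT : T ≠ 0)
    {x : X} {y : Y} (hp : ‖(x, y)‖ = 1) (hatt : ‖T x y‖ = ‖T‖) : ‖x‖ = 1 ∧ ‖y‖ = 1 := by
  have hTpos : 0 < ‖T‖ := by positivity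
  have hx : ‖x‖ ≤ 1 := hp ▸ norm_fst_le (x, y)
  have hy : ‖y‖ ≤ 1 := hp ▸ norm_snd_le (x, y)
  have hxy : 1 ≤ ‖x‖ * ‖y‖ := by
    have := T.le_opNorm₂ x y
    rw [hatt, mul_assoc] at this
    exact (le_mul_iff_one_le_right hTpos).mp (by simpa using this)
  constructor <;> nlinarith [norm_nonneg x, norm_nonneg y]

theorem ContinuousLinearMap.norm_eq_one_of_apply_eq_one {E : Type*} [SeminormedAddCommGroup E]
    [NormedSpace ℝ E] {f : E →L[ℝ] ℝ} {p : E} (hf : ‖f‖ ≤ 1) (hp : ‖p‖ = 1) (hfp : f p = 1) :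
    ‖f‖ = 1 :=
  le_antisymm hf (by simpa [hfp, hp] using f.le_opNorm p)

theorem not_smoothPt_prod_of_norm_eq_one {x : X} {y : Y} (hx : ‖x‖ = 1) (hy : ‖y‖ = 1) :
    ¬ SmoothPt (x, y) := by
  rintro ⟨hp, huniq⟩
  obtain ⟨f, hf, hfx⟩ := exists_dual_vector ℝ x (norm_ne_zero_iff.mp (by simp [hx]))
  obtain ⟨g, hg, hgy⟩ := exists_dual_vector ℝ y (norm_ne_zero_iff.mp (by simp [hy]))
  set F := f.comp (ContinuousLinearMap.fst ℝ X Y)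
  set G := g.comp (ContinuousLinearMap.snd ℝ X Y)
  have hFp : F (x, y) = 1 := by simp [F, hfx, hx]
  have hGp : G (x, y) = 1 := by simp [G, hgy, hy]
  have hF : ‖F‖ ≤ 1 := calc
    ‖F‖ ≤ ‖f‖ * ‖ContinuousLinearMap.fst ℝ X Y‖ := f.opNorm_comp_le _
    _ ≤ 1 * 1 := by gcongr; exacts [hf.le, ContinuousLinearMap.norm_fst_le ℝ X Y]
    _ = 1 := one_mul 1
  have hG : ‖G‖ ≤ 1 := calc
    ‖G‖ ≤ ‖g‖ * ‖ContinuousLinearMap.snd ℝ X Y‖ := g.opNorm_comp_le _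
    _ ≤ 1 * 1 := by gcongr; exacts [hg.le, ContinuousLinearMap.norm_snd_le ℝ X Y]
    _ = 1 := one_mul 1
  have hFG : F = G := huniq.unique
    ⟨F.norm_eq_one_of_apply_eq_one hF hp hFp, hFp⟩ ⟨G.norm_eq_one_of_apply_eq_one hG hp hGp, hGp⟩
  have := congrArg (fun L => L ((0 : X), y)) hFG
  simp [F, G, hgy, hy] at this

end

theorem statement8_general {X Y Z : Type*} [NormedAddCommGroup X] [NormedSpace ℝ X]
    [NormedAddCommGroup Y] [NormedSpace ℝ Y] [NormedAddCommGroup Z] [NormedSpace ℝ Z]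
    (T : X →L[ℝ] Y →L[ℝ] Z) (hT : T ≠ 0) :
    ∀ p : X × Y, ‖p‖ = 1 → ‖T p.1 p.2‖ = ‖T‖ → ¬ SmoothPt p := by
  rintro ⟨x, y⟩ hp hatt
  obtain ⟨hx, hy⟩ := norm_eq_one_of_norm_apply_apply_eq_opNorm hT hp hatt
  exact not_smoothPt_prod_of_norm_eq_one hx hy

/-- A nonzero bounded bilinear operator never attains its norm at a smooth point of
the unit sphere of the max-norm product. -/
theorem statement8 {X Y Z : Type*} [NormedAddCommGroup X] [NormedSpace ℝ X]
    [NormedAddCommGroup Y] [NormedSpace ℝ Y] [NormedAddCommGroup Z] [NormedSpace ℝ Z]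
    (hX : 2 ≤ Module.rank ℝ X) (hY : 2 ≤ Module.rank ℝ Y)
    (T : X →L[ℝ] Y →L[ℝ] Z) (hT : T ≠ 0) :
    ∀ p : X × Y, ‖p‖ = 1 → ‖T p.1 p.2‖ = ‖T‖ → ¬ SmoothPt p :=
  statement8_general T hT
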